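/- For any SU(2) parameterizations with angles satisfying |(π/2)ξ − θ| ≤ 2^{-d-1}π, |2πγ⁺ − (α+β)/2| ≤ 2^{1−d}π, and |2πγ⁻ − (α−β)/2| ≤ 2^{1−d}π, the operator norm distance between U(α,β,θ) and the matrix U(2π(γ⁺+γ⁻), 2π(γ⁺−γ⁻), (π/2)ξ) is at most 2^{3−d}π. -/

import Mathlib

open scoped Matrix.Norms.L2Operator

/-- The `SU(2)` matrix `U(α,β,θ) = [[e^{iα}cosθ, −e^{iβ}sinθ],[e^{−iβ}sinθ, e^{−iα}cosθ]]`. -/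
noncomputable def Umat (α β θ : ℝ) : Matrix (Fin 2) (Fin 2) ℂ :=
  !![Complex.exp (α * Complex.I) * Real.cos θ, -(Complex.exp (β * Complex.I)) * Real.sin θ;
     Complex.exp (-β * Complex.I) * Real.sin θ, Complex.exp (-α * Complex.I) * Real.cos θ]

section UmatAux

/-- Frobenius-type bound on the L2 operator norm. -/
private lemma l2_opNorm_le_of_frob {n : ℕ} (A : Matrix (Fin n) (Fin n) ℂ) {c : ℝ} (hc : 0 ≤ c)
    (h : ∑ i, ∑ j, ‖A i j‖ ^ 2 ≤ c ^ 2) : ‖A‖ ≤ c := by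
  rw [Matrix.l2_opNorm_def]
  refine ContinuousLinearMap.opNorm_le_bound _ hc fun x => ?_
  set v : Fin n → ℂ := (WithLp.equiv 2 (Fin n → ℂ)) x with hv
  have hx : ‖x‖ = Real.sqrt (∑ j, ‖v j‖ ^ 2) := EuclideanSpace.norm_eq x
  have happ : ‖(LinearEquiv.trans Matrix.toEuclideanLin LinearMap.toContinuousLinearMap A) x‖
      = Real.sqrt (∑ i, ‖∑ j, A i j * v j‖ ^ 2) := by
    rw [LinearEquiv.trans_apply, LinearMap.coe_toContinuousLinearMap',
      Matrix.toEuclideanLin_apply, EuclideanSpace.norm_eq]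
    congr 1
  clear_value v
  rw [happ, hx, ← Real.sqrt_sq hc, ← Real.sqrt_mul (sq_nonneg c)]
  apply Real.sqrt_le_sqrt
  have key : ∀ i, ‖∑ j, A i j * v j‖ ^ 2 ≤ (∑ j, ‖A i j‖ ^ 2) * (∑ j, ‖v j‖ ^ 2) := by
    intro i
    have h1 : ‖∑ j, A i j * v j‖ ≤ ∑ j, ‖A i j‖ * ‖v j‖ := by
      refine (norm_sum_le _ _).trans_eq ?_
      exact Finset.sum_congr rfl fun j _ => norm_mul _ _
    have h2 : (∑ j, ‖A i j‖ * ‖v j‖) ^ 2 ≤ (∑ j, ‖A i j‖ ^ 2) * (∑ j, ‖v j‖ ^ 2) :=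
      Finset.sum_mul_sq_le_sq_mul_sq _ _ _
    exact le_trans (pow_le_pow_left₀ (norm_nonneg _) h1 2) h2
  calc ∑ i, ‖∑ j, A i j * v j‖ ^ 2
      ≤ ∑ i, (∑ j, ‖A i j‖ ^ 2) * (∑ j, ‖v j‖ ^ 2) := Finset.sum_le_sum fun i _ => key i
    _ = (∑ i, ∑ j, ‖A i j‖ ^ 2) * (∑ j, ‖v j‖ ^ 2) := by rw [← Finset.sum_mul]
    _ ≤ c ^ 2 * ∑ j, ‖v j‖ ^ 2 := by
        apply mul_le_mul_of_nonneg_right h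
        exact Finset.sum_nonneg fun j _ => sq_nonneg _

private lemma two_sub_two_cos_le (t : ℝ) : 2 - 2 * Real.cos t ≤ t ^ 2 := by
  have hc := Real.cos_two_mul' (t / 2)
  rw [show 2 * (t / 2) = t by ring] at hc
  nlinarith [Real.sin_sq_le_sq (x := t / 2), Real.sin_sq_add_cos_sq (t / 2)]

private lemma norm_exp_I_sub_exp_I_sq (x y : ℝ) :
    ‖Complex.exp (x * Complex.I) - Complex.exp (y * Complex.I)‖ ^ 2 ≤ (x - y) ^ 2 := by
  have h2cos := two_sub_two_cos_le (x - y)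
  have hz : Complex.exp ((x:ℂ) * Complex.I) - Complex.exp ((y:ℂ) * Complex.I)
      = Complex.ofReal (Real.cos x - Real.cos y)
        + Complex.ofReal (Real.sin x - Real.sin y) * Complex.I := by
    rw [Complex.exp_mul_I, Complex.exp_mul_I]
    push_cast
    ring
  rw [hz, Complex.sq_norm, Complex.normSq_add_mul_I]
  nlinarith [Real.cos_sub x y, Real.sin_sq_add_cos_sq x, Real.sin_sq_add_cos_sq y]

/-- `diag (e^{ia}, e^{-ia})`. -/
private noncomputable def Dmat (a : ℝ) : Matrix (Fin 2) (Fin 2) ℂ :=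
  Matrix.diagonal ![Complex.exp ((a : ℂ) * Complex.I), Complex.exp ((-a : ℂ) * Complex.I)]

/-- The rotation matrix. -/
private noncomputable def Rmat (θ : ℝ) : Matrix (Fin 2) (Fin 2) ℂ :=
  !![(Real.cos θ : ℂ), -(Real.sin θ : ℂ); (Real.sin θ : ℂ), (Real.cos θ : ℂ)]

private lemma exp_mul_exp (u v w : ℝ) (h : u + v = w) :
    Complex.exp ((u : ℂ) * Complex.I) * Complex.exp ((v : ℂ) * Complex.I)
      = Complex.exp ((w : ℂ) * Complex.I) := by
  rw [← Complex.exp_add]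
  congr 1
  rw [← h]
  push_cast
  ring

private lemma Dmat_mul_Dmat (a b : ℝ) : Dmat a * Dmat b = Dmat (a + b) := by
  rw [Dmat, Dmat, Dmat, Matrix.diagonal_mul_diagonal]
  refine congrArg Matrix.diagonal ?_
  funext i
  fin_cases i
  · simpa using exp_mul_exp a b (a + b) rfl
  · simpa using exp_mul_exp (-a) (-b) (-(a+b)) (by ring)

private lemma Dmat_star (a : ℝ) : star (Dmat a) = Dmat (-a) := by
  ext i j
  fin_cases i <;> fin_cases j <;>
    simp [Dmat, Matrix.star_eq_conjTranspose, Matrix.conjTranspose_apply, Matrix.diagonal,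
      ← Complex.exp_conj, map_mul, Complex.conj_ofReal, Complex.conj_I]

private lemma Dmat_zero : Dmat 0 = 1 := by
  ext i j
  fin_cases i <;> fin_cases j <;>
    simp [Dmat, Matrix.diagonal, Matrix.one_apply]

private lemma Dmat_unitary (a : ℝ) : Dmat a ∈ unitary (Matrix (Fin 2) (Fin 2) ℂ) := by
  constructor
  · rw [Dmat_star, Dmat_mul_Dmat, show -a + a = 0 by ring, Dmat_zero]
  · rw [Dmat_star, Dmat_mul_Dmat, show a + -a = 0 by ring, Dmat_zero]

private lemma Rmat_mul_Rmat (a b : ℝ) : Rmat a * Rmat b = Rmat (a + b) := by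
  ext i j
  fin_cases i <;> fin_cases j <;>
    simp [Rmat, Matrix.mul_apply, Fin.sum_univ_two, Real.cos_add, Real.sin_add] <;>
    push_cast <;> ring

private lemma Rmat_star (a : ℝ) : star (Rmat a) = Rmat (-a) := by
  ext i j
  fin_cases i <;> fin_cases j <;>
    simp [Rmat, Matrix.star_eq_conjTranspose, Matrix.conjTranspose_apply,
      ← Complex.ofReal_cos, ← Complex.ofReal_sin, Complex.conj_ofReal,
      Real.cos_neg, Real.sin_neg]

private lemma Rmat_zero : Rmat 0 = 1 := by
  ext i j
  fin_cases i <;> fin_cases j <;> simp [Rmat, Matrix.one_apply]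

private lemma Rmat_unitary (a : ℝ) : Rmat a ∈ unitary (Matrix (Fin 2) (Fin 2) ℂ) := by
  constructor
  · rw [Rmat_star, Rmat_mul_Rmat, show -a + a = 0 by ring, Rmat_zero]
  · rw [Rmat_star, Rmat_mul_Rmat, show a + -a = 0 by ring, Rmat_zero]

private lemma Dmat_dist (a b : ℝ) : ‖Dmat a - Dmat b‖ ≤ Real.sqrt 2 * |a - b| := by
  apply l2_opNorm_le_of_frob _ (by positivity)
  have hsq : (Real.sqrt 2 * |a - b|) ^ 2 = 2 * (a - b) ^ 2 := by
    rw [mul_pow, Real.sq_sqrt (by norm_num : (0:ℝ) ≤ 2), sq_abs]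
  rw [hsq, Fin.sum_univ_two, Fin.sum_univ_two, Fin.sum_univ_two]
  have h00 : (Dmat a - Dmat b) 0 0
      = Complex.exp ((a : ℂ) * Complex.I) - Complex.exp ((b : ℂ) * Complex.I) := by
    simp [Dmat]
  have h11 : (Dmat a - Dmat b) 1 1
      = Complex.exp ((-a : ℂ) * Complex.I) - Complex.exp ((-b : ℂ) * Complex.I) := by
    simp [Dmat]
  have h01 : (Dmat a - Dmat b) 0 1 = 0 := by simp [Dmat]
  have h10 : (Dmat a - Dmat b) 1 0 = 0 := by simp [Dmat]
  rw [h00, h11, h01, h10]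
  simp only [norm_zero]
  have k1 := norm_exp_I_sub_exp_I_sq a b
  have k2 := norm_exp_I_sub_exp_I_sq (-a) (-b)
  push_cast at k1 k2 ⊢
  nlinarith [k1, k2]

private lemma Rmat_dist (a b : ℝ) : ‖Rmat a - Rmat b‖ ≤ Real.sqrt 2 * |a - b| := by
  apply l2_opNorm_le_of_frob _ (by positivity)
  have hsq : (Real.sqrt 2 * |a - b|) ^ 2 = 2 * (a - b) ^ 2 := by
    rw [mul_pow, Real.sq_sqrt (by norm_num : (0:ℝ) ≤ 2), sq_abs]
  rw [hsq, Fin.sum_univ_two, Fin.sum_univ_two, Fin.sum_univ_two]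
  have hre : ∀ u v : ℝ, ‖(u : ℂ) - (v : ℂ)‖ ^ 2 = (u - v) ^ 2 := by
    intro u v
    rw [← Complex.ofReal_sub, Complex.norm_real, Real.norm_eq_abs, sq_abs]
  have h00 : (Rmat a - Rmat b) 0 0 = ((Real.cos a : ℂ) - (Real.cos b : ℂ)) := by simp [Rmat]
  have h11 : (Rmat a - Rmat b) 1 1 = ((Real.cos a : ℂ) - (Real.cos b : ℂ)) := by simp [Rmat]
  have h01 : (Rmat a - Rmat b) 0 1 = -((Real.sin a : ℂ) - (Real.sin b : ℂ)) := by
    simp [Rmat]; ring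
  have h10 : (Rmat a - Rmat b) 1 0 = ((Real.sin a : ℂ) - (Real.sin b : ℂ)) := by simp [Rmat]
  rw [h00, h11, h01, h10, norm_neg]
  simp only [hre]
  have hcs : (Real.cos a - Real.cos b) ^ 2 + (Real.sin a - Real.sin b) ^ 2 ≤ (a - b) ^ 2 := by
    have h2cos := two_sub_two_cos_le (a - b)
    nlinarith [Real.cos_sub a b, Real.sin_sq_add_cos_sq a, Real.sin_sq_add_cos_sq b]
  nlinarith [hcs]

end UmatAux

private lemma Umat_decomp (α β θ : ℝ) :
    Umat α β θ = Dmat ((α + β) / 2) * Rmat θ * Dmat ((α - β) / 2) := by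
  have e1 := exp_mul_exp ((α + β) / 2) ((α - β) / 2) α (by ring)
  have e2 := exp_mul_exp ((α + β) / 2) (-((α - β) / 2)) β (by ring)
  have e3 := exp_mul_exp (-((α + β) / 2)) ((α - β) / 2) (-β) (by ring)
  have e4 := exp_mul_exp (-((α + β) / 2)) (-((α - β) / 2)) (-α) (by ring)
  push_cast at e1 e2 e3 e4
  simp only [neg_mul] at e1 e2 e3 e4
  ext i j
  fin_cases i <;> fin_cases j <;>
    simp [Umat, Dmat, Rmat, Matrix.mul_apply, Fin.sum_univ_two, Matrix.diagonal]
  · linear_combination (-(Complex.cos (θ : ℂ))) * e1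
  · linear_combination (-(Complex.sin (θ : ℂ))) * e2
  · linear_combination (-(Complex.sin (θ : ℂ))) * e3
  · linear_combination (-(Complex.cos (θ : ℂ))) * e4

/-- If the approximating angles satisfy `|π/2·ξ − θ| ≤ 2^{-d-1}π`,
`|2πγ⁺ − (α+β)/2| ≤ 2^{1−d}π` and `|2πγ⁻ − (α−β)/2| ≤ 2^{1−d}π`, then
`‖U(α,β,θ) − U(2π(γ⁺+γ⁻), 2π(γ⁺−γ⁻), π/2·ξ)‖_∞ ≤ 2^{3−d}π`. -/
theorem Umat_approx_close (d : ℕ) (α β θ ξ γp γm : ℝ)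
    (hθ : |Real.pi / 2 * ξ - θ| ≤ 2 ^ (-(d : ℝ) - 1) * Real.pi)
    (hp : |2 * Real.pi * γp - (α + β) / 2| ≤ 2 ^ (1 - (d : ℝ)) * Real.pi)
    (hm : |2 * Real.pi * γm - (α - β) / 2| ≤ 2 ^ (1 - (d : ℝ)) * Real.pi) :
    ‖Umat α β θ - Umat (2 * Real.pi * (γp + γm)) (2 * Real.pi * (γp - γm)) (Real.pi / 2 * ξ)‖
      ≤ 2 ^ (3 - (d : ℝ)) * Real.pi := by
  have hπ := Real.pi_pos
  have hed : (0:ℝ) < 2 ^ (-(d:ℝ)) := Real.rpow_pos_of_pos two_pos _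
  have h1 : (2:ℝ) ^ (1 - (d:ℝ)) = 2 * 2 ^ (-(d:ℝ)) := by
    rw [show (1 - (d:ℝ)) = 1 + (-(d:ℝ)) by ring, Real.rpow_add two_pos, Real.rpow_one]
  have h2 : (2:ℝ) ^ (-(d:ℝ) - 1) = 2 ^ (-(d:ℝ)) / 2 := by
    rw [show (-(d:ℝ) - 1) = (-(d:ℝ)) + (-1) by ring, Real.rpow_add two_pos,
      Real.rpow_neg_one]
    ring
  have h3 : (2:ℝ) ^ (3 - (d:ℝ)) = 8 * 2 ^ (-(d:ℝ)) := by
    rw [show (3 - (d:ℝ)) = 3 + (-(d:ℝ)) by ring, Real.rpow_add two_pos]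
    norm_num
  have hsqrt2 : Real.sqrt 2 ≤ 1.5 := by
    nlinarith [Real.sq_sqrt (by norm_num : (0:ℝ) ≤ 2), Real.sqrt_nonneg 2]
  set θ' := Real.pi / 2 * ξ with hθ'
  rw [Umat_decomp, Umat_decomp,
    show (2 * Real.pi * (γp + γm) + 2 * Real.pi * (γp - γm)) / 2 = 2 * Real.pi * γp by ring,
    show (2 * Real.pi * (γp + γm) - 2 * Real.pi * (γp - γm)) / 2 = 2 * Real.pi * γm by ring]
  set p := (α + β) / 2 with hpdef
  set m := (α - β) / 2 with hmdef
  set p' := 2 * Real.pi * γp with hp'def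
  set m' := 2 * Real.pi * γm with hm'def
  have split : Dmat p * Rmat θ * Dmat m - Dmat p' * Rmat θ' * Dmat m'
      = (Dmat p - Dmat p') * (Rmat θ * Dmat m)
        + Dmat p' * ((Rmat θ - Rmat θ') * Dmat m)
        + Dmat p' * Rmat θ' * (Dmat m - Dmat m') := by
    noncomm_ring
  rw [split]
  have n1 : ‖(Dmat p - Dmat p') * (Rmat θ * Dmat m)‖ = ‖Dmat p - Dmat p'‖ :=
    CStarRing.norm_mul_mem_unitary _ (mul_mem (Rmat_unitary θ) (Dmat_unitary m))
  have n2 : ‖Dmat p' * ((Rmat θ - Rmat θ') * Dmat m)‖ = ‖Rmat θ - Rmat θ'‖ := by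
    rw [CStarRing.norm_mem_unitary_mul _ (Dmat_unitary p'),
      CStarRing.norm_mul_mem_unitary _ (Dmat_unitary m)]
  have n3 : ‖Dmat p' * Rmat θ' * (Dmat m - Dmat m')‖ = ‖Dmat m - Dmat m'‖ :=
    CStarRing.norm_mem_unitary_mul _ (mul_mem (Dmat_unitary p') (Rmat_unitary θ'))
  have tri : ‖(Dmat p - Dmat p') * (Rmat θ * Dmat m)
        + Dmat p' * ((Rmat θ - Rmat θ') * Dmat m)
        + Dmat p' * Rmat θ' * (Dmat m - Dmat m')‖
      ≤ ‖Dmat p - Dmat p'‖ + ‖Rmat θ - Rmat θ'‖ + ‖Dmat m - Dmat m'‖ := by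
    calc _ ≤ ‖(Dmat p - Dmat p') * (Rmat θ * Dmat m)
            + Dmat p' * ((Rmat θ - Rmat θ') * Dmat m)‖
          + ‖Dmat p' * Rmat θ' * (Dmat m - Dmat m')‖ := norm_add_le _ _
      _ ≤ ‖(Dmat p - Dmat p') * (Rmat θ * Dmat m)‖
          + ‖Dmat p' * ((Rmat θ - Rmat θ') * Dmat m)‖
          + ‖Dmat p' * Rmat θ' * (Dmat m - Dmat m')‖ := by
            gcongr
            exact norm_add_le _ _
      _ = _ := by rw [n1, n2, n3]
  refine tri.trans ?_
  have b1 : ‖Dmat p - Dmat p'‖ ≤ Real.sqrt 2 * (2 ^ (1 - (d:ℝ)) * Real.pi) := by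
    refine (Dmat_dist p p').trans ?_
    have : |p - p'| = |p' - p| := abs_sub_comm _ _
    rw [this]
    gcongr
  have b2 : ‖Rmat θ - Rmat θ'‖ ≤ Real.sqrt 2 * (2 ^ (-(d:ℝ) - 1) * Real.pi) := by
    refine (Rmat_dist θ θ').trans ?_
    have : |θ - θ'| = |θ' - θ| := abs_sub_comm _ _
    rw [this]
    gcongr
  have b3 : ‖Dmat m - Dmat m'‖ ≤ Real.sqrt 2 * (2 ^ (1 - (d:ℝ)) * Real.pi) := by
    refine (Dmat_dist m m').trans ?_
    have : |m - m'| = |m' - m| := abs_sub_comm _ _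
    rw [this]
    gcongr
  rw [h1] at b1 b3
  rw [h2] at b2
  rw [h3]
  nlinarith [b1, b2, b3, Real.sqrt_nonneg 2, mul_pos hed hπ]
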